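/- arXiv:2112.07377 — 5 statements merged into one kernel-verified Lean document; each statement's English description precedes it below -/
import Mathlib

section
/- In the calculus NMVL_A, the cut rule and the resolution rule are derivable from each other: every sequent derivable (from a set of hypothesis sequents) in the system with cut but without resolution is derivable in the system with resolution but without cut, and conversely. -/
/-- Formulas over a set `C` of connectives (applied to lists of arguments). -/
inductive Fm (C : Type) : Type
  | atom : ℕ → Fm C
  | app : C → List (Fm C) → Fm C

noncomputable instance {C : Type} : DecidableEq (Fm C) := Classical.decEq _

/-- A sequent of finite sets of labelled formulas. -/
structure Sequent (C : Type) [DecidableEq C] (n : ℕ) where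
  ant : Finset (Fm C × Fin n)
  suc : Finset (Fm C × Fin n)

variable {C : Type} [DecidableEq C] {n : ℕ}

/-- A valuation legal w.r.t. the non-deterministic tables `tbl`. -/
def IsVal (tbl : C → List (Fin n) → Finset (Fin n)) (v : Fm C → Fin n) : Prop :=
  ∀ c args, v (Fm.app c args) ∈ tbl c (args.map v)

/-- A valuation satisfies a sequent. -/
def Sat (v : Fm C → Fin n) (S : Sequent C n) : Prop :=
  (∀ p ∈ S.ant, v p.1 = p.2) → ∃ p ∈ S.suc, v p.1 = p.2

/-- Semantic entailment. -/
def Entails (tbl : C → List (Fin n) → Finset (Fin n)) (H : Set (Sequent C n)) (S : Sequent C n) : Prop :=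
  ∀ v : Fm C → Fin n, IsVal tbl v → (∀ T ∈ H, Sat v T) → Sat v S

/-- The family (∗(φ₁,…,φ_ℓ)×k)⁻¹ of antecedent sets. -/
def Theta (tbl : C → List (Fin n) → Finset (Fin n)) (c : C) (args : List (Fm C)) (k : Fin n) :
    Set (Finset (Fm C × Fin n)) :=
  { Θ | ∃ ks : List (Fin n), ks.length = args.length ∧ k ∈ tbl c ks ∧ Θ = (args.zip ks).toFinset }

/-- Λ ∈ ⋁(∗(φ₁,…,φ_ℓ)×k)⁻¹ : a choice set hitting each Θ_q and contained in their union. -/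
def Choice (tbl : C → List (Fin n) → Finset (Fin n)) (c : C) (args : List (Fm C)) (k : Fin n)
    (Λ : Finset (Fm C × Fin n)) : Prop :=
  (∀ Θ ∈ Theta tbl c args k, ∃ x ∈ Θ, x ∈ Λ) ∧
  (∀ x ∈ Λ, ∃ Θ ∈ Theta tbl c args k, x ∈ Θ)

/-- Which optional axioms/rules a calculus has. -/
structure Rules where
  tableAx : Bool      -- table axioms (2)
  tableRuleS : Bool   -- succedent table rules (10)
  dualAx : Bool       -- distributively dual axioms (13)
  anteRule : Bool     -- antecedent introduction rules (17)
  multiShift : Bool   -- K-L-multi-shift (16)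
  cut : Bool
  res : Bool

/-- Derivability from hypothesis sequents `H`; axioms (ψ,k)→(ψ,k), L-shift, R-shift and
weakenings are always present, the other axioms/rules are governed by `R`. -/
inductive Deriv (R : Rules) (tbl : C → List (Fin n) → Finset (Fin n)) (H : Set (Sequent C n)) :
    Sequent C n → Prop
  | hyp {S} : S ∈ H → Deriv R tbl H S
  | ax (ψ : Fm C) (k : Fin n) : Deriv R tbl H ⟨{(ψ, k)}, {(ψ, k)}⟩
  | tableAx (c : C) (args : List (Fm C)) (ks : List (Fin n))
      (hlen : ks.length = args.length) (h : R.tableAx = true) :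
      Deriv R tbl H ⟨(args.zip ks).toFinset, (tbl c ks).image (fun k => (Fm.app c args, k))⟩
  | lshift {Γ Δ} (φ : Fm C) (k : Fin n) :
      Deriv R tbl H ⟨insert (φ, k) Γ, Δ⟩ →
      Deriv R tbl H ⟨Γ, Δ ∪ ({k}ᶜ : Finset (Fin n)).image (fun k' => (φ, k'))⟩
  | rshift {Γ Δ} (φ : Fm C) {k' k'' : Fin n} (h : k' ≠ k'') :
      Deriv R tbl H ⟨Γ, insert (φ, k') Δ⟩ → Deriv R tbl H ⟨insert (φ, k'') Γ, Δ⟩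
  | lweak {Γ Δ} (φ : Fm C) (k : Fin n) :
      Deriv R tbl H ⟨Γ, Δ⟩ → Deriv R tbl H ⟨insert (φ, k) Γ, Δ⟩
  | rweak {Γ Δ} (φ : Fm C) (k : Fin n) :
      Deriv R tbl H ⟨Γ, Δ⟩ → Deriv R tbl H ⟨Γ, insert (φ, k) Δ⟩
  | cut {Γ Δ} (φ : Fm C) (k : Fin n) (h : R.cut = true) :
      Deriv R tbl H ⟨Γ, insert (φ, k) Δ⟩ → Deriv R tbl H ⟨insert (φ, k) Γ, Δ⟩ →
      Deriv R tbl H ⟨Γ, Δ⟩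
  | res {Γ Δ' Δ''} (φ : Fm C) {k' k'' : Fin n} (h : R.res = true) (hk : k' ≠ k'') :
      Deriv R tbl H ⟨Γ, insert (φ, k') Δ'⟩ → Deriv R tbl H ⟨Γ, insert (φ, k'') Δ''⟩ →
      Deriv R tbl H ⟨Γ, Δ' ∪ Δ''⟩
  | tableRuleS {Γ Δ} (c : C) (args : List (Fm C)) (ks : List (Fin n))
      (hlen : ks.length = args.length) (h : R.tableRuleS = true)
      (prem : ∀ p ∈ args.zip ks, Deriv R tbl H ⟨Γ, insert p Δ⟩) :
      Deriv R tbl H ⟨Γ, Δ ∪ (tbl c ks).image (fun k => (Fm.app c args, k))⟩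
  | dualAx (c : C) (args : List (Fm C)) (k : Fin n) (Λ : Finset (Fm C × Fin n))
      (h : R.dualAx = true) (hΛ : Choice tbl c args k Λ) :
      Deriv R tbl H ⟨{(Fm.app c args, k)}, Λ⟩
  | anteRule {Γ Δ} (c : C) (args : List (Fm C)) (k : Fin n) (h : R.anteRule = true)
      (prem : ∀ ks : List (Fin n), ks.length = args.length → k ∈ tbl c ks →
        Deriv R tbl H ⟨Γ ∪ (args.zip ks).toFinset, Δ⟩) :
      Deriv R tbl H ⟨insert (Fm.app c args, k) Γ, Δ⟩
  | multiShift {Γ Δ} (φ : Fm C) (K : Finset (Fin n)) (h : R.multiShift = true)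
      (hK : K ≠ Finset.univ)
      (prem : ∀ k ∈ K, Deriv R tbl H ⟨insert (φ, k) Γ, Δ⟩) :
      Deriv R tbl H ⟨Γ, Δ ∪ Kᶜ.image (fun k' => (φ, k'))⟩

/-- NMVL_A : table axioms, cut and resolution. -/
def NMVL_A : Rules := ⟨true, false, false, false, false, true, true⟩
/-- NMVL_A with cut but without resolution. -/
def NMVL_A_cut : Rules := ⟨true, false, false, false, false, true, false⟩
/-- NMVL_A with resolution but without cut. -/
def NMVL_A_res : Rules := ⟨true, false, false, false, false, false, true⟩
/-- NMVL_R : succedent table rules, cut and resolution. -/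
def NMVL_R : Rules := ⟨false, true, false, false, false, true, true⟩
/-- NMVL_R without cut and resolution. -/
def NMVL_R_cf : Rules := ⟨false, true, false, false, false, false, false⟩
/-- NMVL_A^dd : distributively dual axioms, cut and resolution. -/
def NMVL_Add : Rules := ⟨false, false, true, false, false, true, true⟩
/-- NMVL_R^sd : antecedent table rules, multi-shift, cut and resolution. -/
def NMVL_Rsd : Rules := ⟨false, false, false, true, true, true, true⟩

/-! Cut on `(φ, k)` is simulated by L-shifting the right premise to `Γ → Δ, (φ, k')` for all
`k' ≠ k` and resolving each of these labels away against the left premise. Conversely,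
resolution on `(φ, k')` and `(φ, k'')` is simulated by R-shifting `(φ, k')` to the antecedent
of the first premise and cutting on `(φ, k'')`. -/

namespace Deriv

variable {R : Rules} {tbl : C → List (Fin n) → Finset (Fin n)} {H : Set (Sequent C n)}
  {Γ Δ : Finset (Fm C × Fin n)}

lemma rweak_union (d : Deriv R tbl H ⟨Γ, Δ⟩) (Δ₂ : Finset (Fm C × Fin n)) :
    Deriv R tbl H ⟨Γ, Δ ∪ Δ₂⟩ := by
  induction Δ₂ using Finset.induction with
  | empty => simpa using d
  | insert p Δ₂ _ ih =>
    rw [Finset.union_insert]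
    exact rweak p.1 p.2 ih

lemma resolve_labels (hres : R.res = true) {φ : Fm C} {k : Fin n}
    (d : Deriv R tbl H ⟨Γ, insert (φ, k) Δ⟩) {K : Finset (Fin n)} (hk : k ∉ K)
    (dK : Deriv R tbl H ⟨Γ, Δ ∪ K.image (fun k' => (φ, k'))⟩) : Deriv R tbl H ⟨Γ, Δ⟩ := by
  induction K using Finset.induction with
  | empty => simpa using dK
  | insert k' K _ ih =>
    have hk' : k' ≠ k := by rintro rfl; exact hk (Finset.mem_insert_self _ _)
    rw [Finset.image_insert, Finset.union_insert] at dK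
    have d' := res φ hres hk' dK d
    rw [Finset.union_right_comm, Finset.union_idempotent] at d'
    exact ih (fun h => hk (Finset.mem_insert_of_mem h)) d'

lemma cut_of_res (hres : R.res = true) {φ : Fm C} {k : Fin n}
    (d₁ : Deriv R tbl H ⟨Γ, insert (φ, k) Δ⟩) (d₂ : Deriv R tbl H ⟨insert (φ, k) Γ, Δ⟩) :
    Deriv R tbl H ⟨Γ, Δ⟩ :=
  resolve_labels hres d₁ (by simp) (lshift φ k d₂)

lemma res_of_cut (hcut : R.cut = true) {Δ' Δ'' : Finset (Fm C × Fin n)} {φ : Fm C}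
    {k' k'' : Fin n} (hk : k' ≠ k'') (d₁ : Deriv R tbl H ⟨Γ, insert (φ, k') Δ'⟩)
    (d₂ : Deriv R tbl H ⟨Γ, insert (φ, k'') Δ''⟩) : Deriv R tbl H ⟨Γ, Δ' ∪ Δ''⟩ := by
  have d₁' := rweak_union (rshift φ hk d₁) Δ''
  have d₂' := rweak_union d₂ Δ'
  rw [Finset.insert_union, Finset.union_comm Δ'' Δ'] at d₂'
  exact cut φ k'' hcut d₂' d₁'

lemma nmvlA_res_of_nmvlA_cut {S : Sequent C n} (d : Deriv NMVL_A_cut tbl H S) :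
    Deriv NMVL_A_res tbl H S := by
  induction d with
  | hyp h => exact hyp h
  | ax ψ k => exact ax ψ k
  | tableAx c args ks hlen => exact tableAx c args ks hlen rfl
  | lshift φ k _ ih => exact lshift φ k ih
  | rshift φ hk _ ih => exact rshift φ hk ih
  | lweak φ k _ ih => exact lweak φ k ih
  | rweak φ k _ ih => exact rweak φ k ih
  | cut _ _ _ _ _ ih₁ ih₂ => exact cut_of_res rfl ih₁ ih₂
  | res _ h => cases h
  | tableRuleS _ _ _ _ h => cases h
  | dualAx _ _ _ _ h => cases h
  | anteRule _ _ _ h => cases h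
  | multiShift _ _ h => cases h

lemma nmvlA_cut_of_nmvlA_res {S : Sequent C n} (d : Deriv NMVL_A_res tbl H S) :
    Deriv NMVL_A_cut tbl H S := by
  induction d with
  | hyp h => exact hyp h
  | ax ψ k => exact ax ψ k
  | tableAx c args ks hlen => exact tableAx c args ks hlen rfl
  | lshift φ k _ ih => exact lshift φ k ih
  | rshift φ hk _ ih => exact rshift φ hk ih
  | lweak φ k _ ih => exact lweak φ k ih
  | rweak φ k _ ih => exact rweak φ k ih
  | cut _ _ h => cases h
  | res _ _ hk _ _ ih₁ ih₂ => exact res_of_cut rfl hk ih₁ ih₂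
  | tableRuleS _ _ _ _ h => cases h
  | dualAx _ _ _ _ h => cases h
  | anteRule _ _ _ h => cases h
  | multiShift _ _ h => cases h

end Deriv

theorem stmt1_general (tbl : C → List (Fin n) → Finset (Fin n))
    (H : Set (Sequent C n)) (S : Sequent C n) :
    Deriv NMVL_A_cut tbl H S ↔ Deriv NMVL_A_res tbl H S :=
  ⟨Deriv.nmvlA_res_of_nmvlA_cut, Deriv.nmvlA_cut_of_nmvlA_res⟩

/-- in NMVL_A, cut and resolution are derivable from each other. -/
theorem stmt1 (hn : 2 ≤ n) (tbl : C → List (Fin n) → Finset (Fin n))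
    (htbl : ∀ c ks, (tbl c ks).Nonempty) (H : Set (Sequent C n)) (S : Sequent C n) :
    Deriv NMVL_A_cut tbl H S ↔ Deriv NMVL_A_res tbl H S :=
  stmt1_general tbl H S
end

section
/- If a sequent Γ → Δ is not derivable in NMVL_A, then the antecedent Γ contains no two labelled formulas (φ,k′), (φ,k″) with the same formula φ and distinct labels k′ ≠ k″. -/
variable {C : Type} [DecidableEq C] {n : ℕ}

namespace Deriv

variable {R : Rules} {tbl : C → List (Fin n) → Finset (Fin n)} {H : Set (Sequent C n)}

theorem union_ant {Γ Δ : Finset (Fm C × Fin n)} (Γ' : Finset (Fm C × Fin n))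
    (h : Deriv R tbl H ⟨Γ, Δ⟩) : Deriv R tbl H ⟨Γ' ∪ Γ, Δ⟩ := by
  induction Γ' using Finset.induction_on with
  | empty => simpa using h
  | insert a s _ ih => simpa only [Finset.insert_union] using ih.lweak a.1 a.2

theorem union_suc {Γ Δ : Finset (Fm C × Fin n)} (Δ' : Finset (Fm C × Fin n))
    (h : Deriv R tbl H ⟨Γ, Δ⟩) : Deriv R tbl H ⟨Γ, Δ' ∪ Δ⟩ := by
  induction Δ' using Finset.induction_on with
  | empty => simpa using h
  | insert a s _ ih => simpa only [Finset.insert_union] using ih.rweak a.1 a.2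

theorem mono {Γ₀ Δ₀ Γ Δ : Finset (Fm C × Fin n)} (hΓ : Γ₀ ⊆ Γ) (hΔ : Δ₀ ⊆ Δ)
    (h : Deriv R tbl H ⟨Γ₀, Δ₀⟩) : Deriv R tbl H ⟨Γ, Δ⟩ := by
  simpa only [Finset.union_eq_left.mpr hΓ, Finset.union_eq_left.mpr hΔ] using
    (h.union_ant Γ).union_suc Δ

theorem of_distinct_labels (φ : Fm C) {k' k'' : Fin n} (hk : k' ≠ k'') :
    Deriv R tbl H ⟨{(φ, k''), (φ, k')}, ∅⟩ :=
  (Deriv.ax φ k').rshift φ hk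

theorem of_mem_of_mem_of_ne {Γ Δ : Finset (Fm C × Fin n)} {φ : Fm C} {k' k'' : Fin n}
    (hk : k' ≠ k'') (h' : (φ, k') ∈ Γ) (h'' : (φ, k'') ∈ Γ) : Deriv R tbl H ⟨Γ, Δ⟩ :=
  (of_distinct_labels φ hk).mono (by simp [Finset.insert_subset_iff, h', h''])
    (Finset.empty_subset Δ)

end Deriv

theorem stmt2_general (tbl : C → List (Fin n) → Finset (Fin n))
    (Γ Δ : Finset (Fm C × Fin n))
    (hund : ¬ Deriv NMVL_A tbl ∅ ⟨Γ, Δ⟩) :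
    ∀ (φ : Fm C) (k' k'' : Fin n), k' ≠ k'' → (φ, k') ∈ Γ → (φ, k'') ∈ Γ → False :=
  fun _ _ _ hk h' h'' => hund (Deriv.of_mem_of_mem_of_ne hk h' h'')

/-- an NMVL_A-underivable sequent has no formula with two distinct labels
in its antecedent. -/
theorem stmt2 (hn : 2 ≤ n) (tbl : C → List (Fin n) → Finset (Fin n))
    (htbl : ∀ c ks, (tbl c ks).Nonempty) (Γ Δ : Finset (Fm C × Fin n))
    (hund : ¬ Deriv NMVL_A tbl ∅ ⟨Γ, Δ⟩) :
    ∀ (φ : Fm C) (k' k'' : Fin n), k' ≠ k'' → (φ, k') ∈ Γ → (φ, k'') ∈ Γ → False :=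
  stmt2_general tbl Γ Δ hund
end

section
/- The calculus NMVL_A is sound: if a sequent Γ → Δ is derivable in NMVL_A from a set of hypothesis sequents Σ, then every valuation satisfying all sequents in Σ satisfies Γ → Δ. -/
variable {C : Type} [DecidableEq C] {n : ℕ}

/-! A valuation satisfying the premisses of a rule of NMVL_A satisfies its conclusion, and every
axiom is satisfied by every valuation respecting the tables; soundness follows by induction on
derivations. The two rules with a real case split are L-shift (either `v φ = k`, or `v φ` is one
of the other values now listed in the succedent) and resolution (`v φ` differs from `k'` or from
`k''`, so one of the two premisses yields a formula of `Δ' ∪ Δ''`). -/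

lemma List.map_eq_of_forall_mem_zip {α β : Type*} (f : α → β) :
    ∀ {l : List α} {l' : List β}, l'.length = l.length →
      (∀ p ∈ l.zip l', f p.1 = p.2) → l.map f = l'
  | [], [], _, _ => rfl
  | a :: l, b :: l', hlen, h => by
    rw [List.map_cons, h (a, b) (by simp),
      List.map_eq_of_forall_mem_zip f (by simpa using hlen) fun p hp => h p (by simp [hp])]

namespace Sat

variable {v : Fm C → Fin n} {Γ Δ : Finset (Fm C × Fin n)}

lemma ax (ψ : Fm C) (k : Fin n) : Sat v ⟨{(ψ, k)}, {(ψ, k)}⟩ :=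
  fun h => ⟨(ψ, k), Finset.mem_singleton_self _, h _ (Finset.mem_singleton_self _)⟩

lemma tableAx {tbl : C → List (Fin n) → Finset (Fin n)} (hv : IsVal tbl v) (c : C)
    {args : List (Fm C)} {ks : List (Fin n)} (hlen : ks.length = args.length) :
    Sat v ⟨(args.zip ks).toFinset, (tbl c ks).image (fun k => (Fm.app c args, k))⟩ := by
  intro hant
  have hmap : args.map v = ks :=
    List.map_eq_of_forall_mem_zip v hlen fun p hp => hant p (List.mem_toFinset.mpr hp)
  exact ⟨_, Finset.mem_image_of_mem _ (hmap ▸ hv c args), rfl⟩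

lemma lshift {φ : Fm C} {k : Fin n} (h : Sat v ⟨insert (φ, k) Γ, Δ⟩) :
    Sat v ⟨Γ, Δ ∪ ({k}ᶜ : Finset (Fin n)).image (fun k' => (φ, k'))⟩ := by
  intro hant
  by_cases hφ : v φ = k
  · obtain ⟨p, hp, hvp⟩ := h (Finset.forall_mem_insert _ _ _ |>.mpr ⟨hφ, hant⟩)
    exact ⟨p, Finset.mem_union_left _ hp, hvp⟩
  · exact ⟨(φ, v φ), Finset.mem_union_right _ (by simp [hφ]), rfl⟩

lemma rshift {φ : Fm C} {k' k'' : Fin n} (hk : k' ≠ k'') (h : Sat v ⟨Γ, insert (φ, k') Δ⟩) :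
    Sat v ⟨insert (φ, k'') Γ, Δ⟩ := by
  intro hant
  obtain ⟨hφ, hΓ⟩ := Finset.forall_mem_insert _ _ _ |>.mp hant
  obtain ⟨p, hp, hvp⟩ := h hΓ
  rcases Finset.mem_insert.mp hp with rfl | hp
  · exact absurd (hvp.symm.trans hφ) hk
  · exact ⟨p, hp, hvp⟩

lemma lweak (φ : Fm C) (k : Fin n) (h : Sat v ⟨Γ, Δ⟩) : Sat v ⟨insert (φ, k) Γ, Δ⟩ :=
  fun hant => h fun p hp => hant p (Finset.mem_insert_of_mem hp)

lemma rweak (φ : Fm C) (k : Fin n) (h : Sat v ⟨Γ, Δ⟩) : Sat v ⟨Γ, insert (φ, k) Δ⟩ :=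
  fun hant => (h hant).imp fun _ ⟨hp, hvp⟩ => ⟨Finset.mem_insert_of_mem hp, hvp⟩

lemma cut {φ : Fm C} {k : Fin n} (h₁ : Sat v ⟨Γ, insert (φ, k) Δ⟩)
    (h₂ : Sat v ⟨insert (φ, k) Γ, Δ⟩) : Sat v ⟨Γ, Δ⟩ := by
  intro hant
  obtain ⟨p, hp, hvp⟩ := h₁ hant
  rcases Finset.mem_insert.mp hp with rfl | hp
  · exact h₂ (Finset.forall_mem_insert _ _ _ |>.mpr ⟨hvp, hant⟩)
  · exact ⟨p, hp, hvp⟩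

lemma res {Δ' Δ'' : Finset (Fm C × Fin n)} {φ : Fm C} {k' k'' : Fin n} (hk : k' ≠ k'')
    (h₁ : Sat v ⟨Γ, insert (φ, k') Δ'⟩) (h₂ : Sat v ⟨Γ, insert (φ, k'') Δ''⟩) :
    Sat v ⟨Γ, Δ' ∪ Δ''⟩ := by
  intro hant
  by_cases hφ : v φ = k'
  · obtain ⟨p, hp, hvp⟩ := h₂ hant
    rcases Finset.mem_insert.mp hp with rfl | hp
    · exact absurd (hφ.symm.trans hvp) hk
    · exact ⟨p, Finset.mem_union_right _ hp, hvp⟩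
  · obtain ⟨p, hp, hvp⟩ := h₁ hant
    rcases Finset.mem_insert.mp hp with rfl | hp
    · exact absurd hvp hφ
    · exact ⟨p, Finset.mem_union_left _ hp, hvp⟩

end Sat

theorem Deriv.entails {R : Rules} (hR : R.tableRuleS = false ∧ R.dualAx = false ∧
      R.anteRule = false ∧ R.multiShift = false)
    {tbl : C → List (Fin n) → Finset (Fin n)} {H : Set (Sequent C n)} {S : Sequent C n}
    (hder : Deriv R tbl H S) : Entails tbl H S := by
  obtain ⟨hS, hD, hA, hM⟩ := hR
  intro v hv hH
  induction hder with
  | hyp hmem => exact hH _ hmem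
  | ax ψ k => exact Sat.ax ψ k
  | tableAx c _ _ hlen => exact Sat.tableAx hv c hlen
  | lshift _ _ _ ih => exact ih.lshift
  | rshift _ hk _ ih => exact ih.rshift hk
  | lweak φ k _ ih => exact ih.lweak φ k
  | rweak φ k _ ih => exact ih.rweak φ k
  | cut _ _ _ _ _ ih₁ ih₂ => exact ih₁.cut ih₂
  | res _ _ hk _ _ ih₁ ih₂ => exact Sat.res hk ih₁ ih₂
  | tableRuleS _ _ _ _ h => exact absurd h (by simp [hS])
  | dualAx _ _ _ _ h => exact absurd h (by simp [hD])
  | anteRule _ _ _ h => exact absurd h (by simp [hA])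
  | multiShift _ _ h => exact absurd h (by simp [hM])

theorem stmt3_general (tbl : C → List (Fin n) → Finset (Fin n))
    (H : Set (Sequent C n)) (S : Sequent C n)
    (hder : Deriv NMVL_A tbl H S) : Entails tbl H S :=
  hder.entails ⟨rfl, rfl, rfl, rfl⟩

/-- soundness of NMVL_A. -/
theorem stmt3 (hn : 2 ≤ n) (tbl : C → List (Fin n) → Finset (Fin n))
    (htbl : ∀ c ks, (tbl c ks).Nonempty) (H : Set (Sequent C n)) (S : Sequent C n)
    (hder : Deriv NMVL_A tbl H S) : Entails tbl H S :=
  stmt3_general tbl H S hder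
end

section
/- The calculus NMVL_A is strongly complete: if every valuation satisfying all sequents in a set Σ also satisfies the sequent Γ → Δ, then Γ → Δ is derivable in NMVL_A from Σ. -/
variable {C : Type} [DecidableEq C] {n : ℕ}

/-!
Lindenbaum construction. Sign antecedent formulas `true` and succedent formulas `false`. If `S`
is not derivable, extend the signed formulas of `S` to a maximal set `M` of signed labelled
formulas that contains the signed formulas of no derivable sequent; it exists by
Teichmüller–Tukey because derivability only involves finitely many formulas at a time. Cut forces
`M` to decide every labelled formula, and the shift rules make its positive part the graph of a
map `v`. Then `v` satisfies every derivable sequent, hence every table axiom (so `v` is a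
valuation) and every hypothesis, while it falsifies `S`.
-/

variable {R : Rules} {tbl : C → List (Fin n) → Finset (Fin n)} {H : Set (Sequent C n)}

namespace Deriv

theorem weaken_ant {Γ Γ' Δ : Finset (Fm C × Fin n)} (h : Deriv R tbl H ⟨Γ, Δ⟩) (hΓ : Γ ⊆ Γ') :
    Deriv R tbl H ⟨Γ', Δ⟩ := by
  have weakened : ∀ E, Deriv R tbl H ⟨Γ ∪ E, Δ⟩ := by
    intro E
    induction E using Finset.induction_on with
    | empty => simpa using h
    | insert _ _ _ ih => rw [Finset.union_insert]; exact lweak _ _ ih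
  simpa only [Finset.union_eq_right.mpr hΓ] using weakened Γ'

theorem weaken_suc {Γ Δ Δ' : Finset (Fm C × Fin n)} (h : Deriv R tbl H ⟨Γ, Δ⟩) (hΔ : Δ ⊆ Δ') :
    Deriv R tbl H ⟨Γ, Δ'⟩ := by
  have weakened : ∀ E, Deriv R tbl H ⟨Γ, Δ ∪ E⟩ := by
    intro E
    induction E using Finset.induction_on with
    | empty => simpa using h
    | insert _ _ _ ih => rw [Finset.union_insert]; exact rweak _ _ ih
  simpa only [Finset.union_eq_right.mpr hΔ] using weakened Δ'

theorem weaken {Γ Δ Γ' Δ' : Finset (Fm C × Fin n)} (h : Deriv R tbl H ⟨Γ, Δ⟩) (hΓ : Γ ⊆ Γ')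
    (hΔ : Δ ⊆ Δ') : Deriv R tbl H ⟨Γ', Δ'⟩ :=
  (h.weaken_ant hΓ).weaken_suc hΔ

theorem cut_union (hR : R.cut = true) {Γ₁ Δ₁ Γ₂ Δ₂ : Finset (Fm C × Fin n)} (p : Fm C × Fin n)
    (h₁ : Deriv R tbl H ⟨insert p Γ₁, Δ₁⟩) (h₂ : Deriv R tbl H ⟨Γ₂, insert p Δ₂⟩) :
    Deriv R tbl H ⟨Γ₁ ∪ Γ₂, Δ₁ ∪ Δ₂⟩ :=
  cut p.1 p.2 hR
    (h₂.weaken Finset.subset_union_right (Finset.insert_subset_insert _ Finset.subset_union_right))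
    (h₁.weaken (Finset.insert_subset_insert _ Finset.subset_union_left) Finset.subset_union_left)

end Deriv

noncomputable def Sequent.signed (S : Sequent C n) : Finset ((Fm C × Fin n) × Bool) :=
  S.ant.image (·, true) ∪ S.suc.image (·, false)

@[simp]
theorem Sequent.coe_signed_subset {S : Sequent C n} {X : Set ((Fm C × Fin n) × Bool)} :
    ↑S.signed ⊆ X ↔ (∀ p ∈ S.ant, (p, true) ∈ X) ∧ ∀ p ∈ S.suc, (p, false) ∈ X := by
  simp only [Sequent.signed, Finset.coe_union, Finset.coe_image, Set.union_subset_iff,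
    Set.image_subset_iff]
  rfl

variable (R tbl H) in
def Consistent (X : Set ((Fm C × Fin n) × Bool)) : Prop :=
  ∀ S : Sequent C n, ↑S.signed ⊆ X → ¬ Deriv R tbl H S

theorem Consistent.mono {X Y : Set ((Fm C × Fin n) × Bool)} (hX : Consistent R tbl H X)
    (hYX : Y ⊆ X) : Consistent R tbl H Y :=
  fun S hS => hX S (hS.trans hYX)

theorem isOfFiniteCharacter_consistent :
    Order.IsOfFiniteCharacter {X : Set ((Fm C × Fin n) × Bool) | Consistent R tbl H X} :=
  fun _ => ⟨fun hX _ hY _ => hX.mono hY,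
    fun h S hS => h _ hS (Finset.finite_toSet _) S subset_rfl⟩

theorem consistent_signed_of_not_deriv {S : Sequent C n} (hS : ¬ Deriv R tbl H S) :
    Consistent R tbl H ↑S.signed := by
  intro T hT hTd
  rw [Sequent.coe_signed_subset] at hT
  exact hS (hTd.weaken (fun p hp => by simpa [Sequent.signed] using hT.1 p hp)
    (fun p hp => by simpa [Sequent.signed] using hT.2 p hp))

section Maximal

variable {M : Set ((Fm C × Fin n) × Bool)}

theorem Consistent.eq_of_mem {φ : Fm C} {k k' : Fin n} (hM : Consistent R tbl H M)
    (hk : ((φ, k), true) ∈ M) (hk' : ((φ, k'), true) ∈ M) : k = k' := by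
  by_contra hne
  exact hM ⟨insert (φ, k') {(φ, k)}, ∅⟩ (by simp [hk, hk'])
    (Deriv.rshift φ hne (Deriv.ax φ k))

theorem exists_deriv_insert_ant_of_maximal (hM : Maximal (Consistent R tbl H) M)
    {p : Fm C × Fin n} (hp : (p, true) ∉ M) :
    ∃ Γ Δ, (∀ q ∈ Γ, (q, true) ∈ M) ∧ (∀ q ∈ Δ, (q, false) ∈ M) ∧
      Deriv R tbl H ⟨insert p Γ, Δ⟩ := by
  have hins : ¬ Consistent R tbl H (insert (p, true) M) :=
    fun h => hp (hM.2 h (Set.subset_insert _ _) (Set.mem_insert _ _))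
  simp only [Consistent, not_forall, not_not, Sequent.coe_signed_subset] at hins
  obtain ⟨⟨Γ, Δ⟩, ⟨hΓ, hΔ⟩, hd⟩ := hins
  refine ⟨Γ.erase p, Δ, fun q hq => ?_, fun q hq => ?_,
    hd.weaken (Finset.insert_erase_subset p Γ) subset_rfl⟩
  · simpa [Finset.ne_of_mem_erase hq] using hΓ q (Finset.mem_of_mem_erase hq)
  · simpa using hΔ q hq

theorem exists_deriv_insert_suc_of_maximal (hM : Maximal (Consistent R tbl H) M)
    {p : Fm C × Fin n} (hp : (p, false) ∉ M) :
    ∃ Γ Δ, (∀ q ∈ Γ, (q, true) ∈ M) ∧ (∀ q ∈ Δ, (q, false) ∈ M) ∧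
      Deriv R tbl H ⟨Γ, insert p Δ⟩ := by
  have hins : ¬ Consistent R tbl H (insert (p, false) M) :=
    fun h => hp (hM.2 h (Set.subset_insert _ _) (Set.mem_insert _ _))
  simp only [Consistent, not_forall, not_not, Sequent.coe_signed_subset] at hins
  obtain ⟨⟨Γ, Δ⟩, ⟨hΓ, hΔ⟩, hd⟩ := hins
  refine ⟨Γ, Δ.erase p, fun q hq => ?_, fun q hq => ?_,
    hd.weaken subset_rfl (Finset.insert_erase_subset p Δ)⟩
  · simpa using hΓ q hq
  · simpa [Finset.ne_of_mem_erase hq] using hΔ q (Finset.mem_of_mem_erase hq)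

theorem mem_or_mem_of_maximal (hR : R.cut = true) (hM : Maximal (Consistent R tbl H) M)
    (p : Fm C × Fin n) : (p, true) ∈ M ∨ (p, false) ∈ M := by
  by_contra! h
  obtain ⟨Γ₁, Δ₁, hΓ₁, hΔ₁, hd₁⟩ := exists_deriv_insert_ant_of_maximal hM h.1
  obtain ⟨Γ₂, Δ₂, hΓ₂, hΔ₂, hd₂⟩ := exists_deriv_insert_suc_of_maximal hM h.2
  refine hM.1 ⟨Γ₁ ∪ Γ₂, Δ₁ ∪ Δ₂⟩ ?_ (hd₁.cut_union hR p hd₂)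
  simp only [Sequent.coe_signed_subset, Finset.mem_union]
  exact ⟨fun q hq => hq.elim (hΓ₁ q) (hΓ₂ q), fun q hq => hq.elim (hΔ₁ q) (hΔ₂ q)⟩

/-- Without a positive label for `φ`, the L-shift of `(φ, k₀)` yields a derivable sequent whose
succedent lists every other label of `φ`, all of which are negative in `M` by totality. -/
theorem exists_mem_of_maximal (hR : R.cut = true) (hn : 0 < n)
    (hM : Maximal (Consistent R tbl H) M) (φ : Fm C) : ∃ k, ((φ, k), true) ∈ M := by
  by_contra! h
  let k₀ : Fin n := ⟨0, hn⟩
  obtain ⟨Γ, Δ, hΓ, hΔ, hd⟩ := exists_deriv_insert_ant_of_maximal hM (h k₀)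
  refine hM.1 _ ?_ (Deriv.lshift φ k₀ hd)
  simp only [Sequent.coe_signed_subset, Finset.mem_union, Finset.mem_image]
  refine ⟨hΓ, fun q hq => hq.elim (hΔ q) ?_⟩
  rintro ⟨k, -, rfl⟩
  exact (mem_or_mem_of_maximal hR hM (φ, k)).resolve_left (h k)

theorem exists_val_of_maximal (hR : R.cut = true) (hn : 0 < n)
    (hM : Maximal (Consistent R tbl H) M) :
    ∃ v : Fm C → Fin n, ∀ φ k, v φ = k ↔ ((φ, k), true) ∈ M := by
  choose v hv using exists_mem_of_maximal hR hn hM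
  exact ⟨v, fun φ k => ⟨fun h => h ▸ hv φ, hM.1.eq_of_mem (hv φ)⟩⟩

end Maximal

section Satisfaction

variable {M : Set ((Fm C × Fin n) × Bool)} {v : Fm C → Fin n}

theorem sat_of_deriv (hM : Consistent R tbl H M) (htotal : ∀ p, (p, true) ∈ M ∨ (p, false) ∈ M)
    (hv : ∀ φ k, v φ = k ↔ ((φ, k), true) ∈ M) {S : Sequent C n} (hS : Deriv R tbl H S) :
    Sat v S := by
  intro hant
  by_contra! hsuc
  refine hM S ?_ hS
  rw [Sequent.coe_signed_subset]
  exact ⟨fun p hp => (hv p.1 p.2).mp (hant p hp),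
    fun p hp => (htotal p).resolve_left fun h => hsuc p hp ((hv p.1 p.2).mpr h)⟩

theorem not_sat_of_signed_subset (hM : Consistent R tbl H M)
    (hv : ∀ φ k, v φ = k ↔ ((φ, k), true) ∈ M) {S : Sequent C n} (hS : ↑S.signed ⊆ M) :
    ¬ Sat v S := by
  rw [Sequent.coe_signed_subset] at hS
  intro hsat
  obtain ⟨p, hp, hvp⟩ := hsat fun p hp => (hv p.1 p.2).mpr (hS.1 p hp)
  exact hM ⟨{p}, {p}⟩ (by simp [(hv p.1 p.2).mp hvp, hS.2 p hp]) (Deriv.ax p.1 p.2)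

theorem isVal_of_sat_deriv (hR : R.tableAx = true) (hsat : ∀ S, Deriv R tbl H S → Sat v S) :
    IsVal tbl v := by
  intro c args
  obtain ⟨p, hp, hvp⟩ := hsat _ (Deriv.tableAx c args (args.map v) (by simp) hR) fun p hp => by
    rw [List.mem_toFinset, ← List.map_prod_left_eq_zip] at hp
    obtain ⟨a, -, rfl⟩ := List.mem_map.mp hp
    rfl
  obtain ⟨k, hk, rfl⟩ := Finset.mem_image.mp hp
  exact hvp ▸ hk

end Satisfaction

theorem stmt4_general (hn : 2 ≤ n) (tbl : C → List (Fin n) → Finset (Fin n))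
    (H : Set (Sequent C n)) (S : Sequent C n)
    (hent : Entails tbl H S) : Deriv NMVL_A tbl H S := by
  by_contra hS
  obtain ⟨M, hSM, hM⟩ :=
    isOfFiniteCharacter_consistent.exists_maximal (consistent_signed_of_not_deriv hS)
  obtain ⟨v, hv⟩ := exists_val_of_maximal (R := NMVL_A) rfl (by omega) hM
  have hsat : ∀ T, Deriv NMVL_A tbl H T → Sat v T :=
    fun _ => sat_of_deriv hM.1 (mem_or_mem_of_maximal rfl hM) hv
  exact not_sat_of_signed_subset hM.1 hv hSM
    (hent v (isVal_of_sat_deriv rfl hsat) fun T hT => hsat T (.hyp hT))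

/-- strong completeness of NMVL_A. -/
theorem stmt4 (hn : 2 ≤ n) (tbl : C → List (Fin n) → Finset (Fin n))
    (htbl : ∀ c ks, (tbl c ks).Nonempty) (H : Set (Sequent C n)) (S : Sequent C n)
    (hent : Entails tbl H S) : Deriv NMVL_A tbl H S :=
  stmt4_general hn tbl H S hent
end

section
/- Cut and resolution elimination holds for NMVL_R: every sequent derivable in NMVL_R (without hypothesis sequents) is derivable in NMVL_R without using the cut rule or the resolution rule. -/
variable {C : Type} [DecidableEq C] {n : ℕ}

/-! Every rule of `Deriv` is sound for legal valuations, so it suffices to show that the cut-free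
calculus derives every valid sequent. L-shifts, undone by R-shifts, reduce this to sequents
`∅ → Δ`. If `∅ → Δ` were underivable, extend `Δ` to a maximal underivable `Ω` among the finitely
many labelled subformulas of `Δ`, and define a valuation by recursion on formulas, giving each
formula a value whose labelled formula lies outside `Ω`. Such a value always exists: otherwise a
whole row `{ψ} × V` (for an atom), or a whole table row `{∗(φ₁,…,φ_ℓ)} × ∗(v₁,…,v_ℓ)`, lies in
`Ω`, and the axiom with an L-shift, resp. the table rule applied to the sequents
`∅ → Ω, (φⱼ, vⱼ)` (derivable by maximality), derives `∅ → Ω`. The valuation refutes `∅ → Δ`. -/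

theorem Fm.induction {C : Type} {P : Fm C → Prop} (atom : ∀ m, P (.atom m))
    (app : ∀ c args, (∀ a ∈ args, P a) → P (.app c args)) : ∀ φ, P φ
  | .atom m => atom m
  | .app c args => app c args fun a _ => Fm.induction atom app a

attribute [induction_eliminator] Fm.induction

def Fm.subformulas {C : Type} : Fm C → List (Fm C)
  | .atom m => [.atom m]
  | .app c args => .app c args :: args.flatMap Fm.subformulas

theorem Fm.mem_subformulas_self {C : Type} (φ : Fm C) : φ ∈ φ.subformulas := by
  cases φ <;> simp [Fm.subformulas]

theorem Fm.mem_subformulas_of_app_mem {C : Type} {c : C} {args : List (Fm C)} {a : Fm C}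
    (ha : a ∈ args) :
    ∀ φ : Fm C, Fm.app c args ∈ φ.subformulas → a ∈ φ.subformulas := by
  intro φ
  induction φ with
  | atom m => simp [Fm.subformulas]
  | app c' args' ih =>
    simp only [Fm.subformulas, List.mem_cons, Fm.app.injEq, List.mem_flatMap]
    rintro (⟨rfl, rfl⟩ | ⟨b, hb, hsub⟩)
    · exact Or.inr ⟨a, ha, a.mem_subformulas_self⟩
    · exact Or.inr ⟨b, hb, ih b hb hsub⟩

def Fm.eval {C : Type} (a : ℕ → Fin n) (f : C → List (Fm C) → List (Fin n) → Fin n) :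
    Fm C → Fin n
  | .atom m => a m
  | .app c args => f c args (args.map (Fm.eval a f))

theorem isVal_eval {C : Type} {tbl : C → List (Fin n) → Finset (Fin n)} (a : ℕ → Fin n)
    {f : C → List (Fm C) → List (Fin n) → Fin n} (hf : ∀ c args ks, f c args ks ∈ tbl c ks) :
    IsVal tbl (Fm.eval a f) := by
  intro c args
  rw [Fm.eval]
  exact hf c args _

noncomputable def lshiftImage {C : Type} (Γ : Finset (Fm C × Fin n)) : Finset (Fm C × Fin n) :=
  Γ.biUnion fun p => ({p.2}ᶜ : Finset (Fin n)).image (p.1, ·)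

section Structural

variable {R : Rules} {tbl : C → List (Fin n) → Finset (Fin n)} {H : Set (Sequent C n)}

theorem Deriv.weaken_suc_s11 {Γ Δ Δ' : Finset (Fm C × Fin n)} (h : Deriv R tbl H ⟨Γ, Δ⟩)
    (hΔ : Δ ⊆ Δ') : Deriv R tbl H ⟨Γ, Δ'⟩ := by
  rw [← Finset.sdiff_union_of_subset hΔ]
  generalize Δ' \ Δ = E
  induction E using Finset.induction with
  | empty => simpa using h
  | insert p E _ ih => simpa only [Finset.insert_union] using ih.rweak p.1 p.2

theorem Deriv.row [NeZero n] (ψ : Fm C) : Deriv R tbl H ⟨∅, Finset.univ.image (ψ, ·)⟩ := by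
  have h := (Deriv.ax (R := R) (tbl := tbl) (H := H) ψ 0).lshift (Γ := ∅) ψ 0
  rwa [← Finset.image_singleton (ψ, ·), ← Finset.image_union, Finset.union_compl] at h

theorem Deriv.rshift_image {Γ Δ : Finset (Fm C × Fin n)} {φ : Fm C} {k : Fin n}
    {K : Finset (Fin n)} (hk : k ∉ K) (h : Deriv R tbl H ⟨Γ, Δ ∪ K.image (φ, ·)⟩) :
    Deriv R tbl H ⟨insert (φ, k) Γ, Δ⟩ := by
  induction K using Finset.induction generalizing Γ with
  | empty => simpa using h.lweak φ k
  | insert k' K _ ih =>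
    rw [Finset.image_insert, Finset.union_insert] at h
    have hk' : k' ≠ k := by rintro rfl; simp at hk
    simpa only [Finset.insert_idem] using
      ih (fun hK => hk (Finset.mem_insert_of_mem hK)) (h.rshift φ hk')

theorem Deriv.of_lshiftImage {Γ₀ Γ Δ : Finset (Fm C × Fin n)}
    (h : Deriv R tbl H ⟨Γ₀, Δ ∪ lshiftImage Γ⟩) : Deriv R tbl H ⟨Γ ∪ Γ₀, Δ⟩ := by
  induction Γ using Finset.induction generalizing Γ₀ with
  | empty => simpa [lshiftImage] using h
  | insert p Γ _ ih =>
    rw [lshiftImage, Finset.biUnion_insert, ← lshiftImage, Finset.union_left_comm,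
      Finset.union_comm] at h
    rw [Finset.insert_union, ← Finset.union_insert]
    exact ih (h.rshift_image (by simp))

theorem Deriv.of_table_subset (hR : R.tableRuleS = true) {Γ Δ : Finset (Fm C × Fin n)} {c : C}
    {args : List (Fm C)} (v : Fm C → Fin n)
    (hprem : ∀ a ∈ args, Deriv R tbl H ⟨Γ, insert (a, v a) Δ⟩)
    (hsub : ∀ k ∈ tbl c (args.map v), (Fm.app c args, k) ∈ Δ) : Deriv R tbl H ⟨Γ, Δ⟩ := by
  have h := Deriv.tableRuleS c args (args.map v) (List.length_map _) hR (Γ := Γ) (Δ := Δ) <| by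
    rw [← List.map_prod_left_eq_zip]
    simpa using hprem
  rwa [Finset.union_eq_left.2 (by simpa [Finset.image_subset_iff] using hsub)] at h

end Structural

theorem eq_of_mem_zip_map {C : Type} {v : Fm C → Fin n} {args : List (Fm C)} {p : Fm C × Fin n}
    (hp : p ∈ args.zip (args.map v)) : v p.1 = p.2 := by
  rw [← List.map_prod_left_eq_zip] at hp
  obtain ⟨a, -, rfl⟩ := List.mem_map.1 hp
  rfl

theorem IsVal.mem_tbl_of_zip {C : Type} {tbl : C → List (Fin n) → Finset (Fin n)}
    {v : Fm C → Fin n} (hv : IsVal tbl v) {c : C} {args : List (Fm C)}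
    {ks : List (Fin n)} (hlen : ks.length = args.length) (h : ∀ p ∈ args.zip ks, v p.1 = p.2) :
    v (.app c args) ∈ tbl c ks := by
  have hks : args.map v = ks := List.ext_getElem (by simp [hlen]) fun i h₁ h₂ => by
    have hi : i < (args.zip ks).length := by simp_all
    simpa using h _ (List.getElem_mem hi)
  exact hks ▸ hv c args

theorem IsVal.zip_mem_theta {C : Type} {tbl : C → List (Fin n) → Finset (Fin n)}
    {v : Fm C → Fin n} (hv : IsVal tbl v) (c : C) (args : List (Fm C)) :
    (args.zip (args.map v)).toFinset ∈ Theta tbl c args (v (.app c args)) :=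
  ⟨args.map v, List.length_map _, hv c args, rfl⟩

theorem exists_mem_union_image_compl {C : Type} {v : Fm C → Fin n} {Δ : Finset (Fm C × Fin n)}
    {φ : Fm C} {K : Finset (Fin n)} (h : v φ ∈ K → ∃ p ∈ Δ, v p.1 = p.2) :
    ∃ p ∈ Δ ∪ Kᶜ.image (φ, ·), v p.1 = p.2 := by
  by_cases hφ : v φ ∈ K
  · obtain ⟨p, hp, hsat⟩ := h hφ
    exact ⟨p, Finset.mem_union_left _ hp, hsat⟩
  · exact ⟨(φ, v φ), Finset.mem_union_right _ (by simp [hφ]), rfl⟩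

section Soundness

variable {tbl : C → List (Fin n) → Finset (Fin n)} {v : Fm C → Fin n}

theorem IsVal.sat_tableRuleS (hv : IsVal tbl v) {Γ Δ : Finset (Fm C × Fin n)} {c : C}
    {args : List (Fm C)} {ks : List (Fin n)} (hlen : ks.length = args.length)
    (h : ∀ p ∈ args.zip ks, Sat v ⟨Γ, insert p Δ⟩) :
    Sat v ⟨Γ, Δ ∪ (tbl c ks).image (Fm.app c args, ·)⟩ := by
  intro hΓ
  by_cases hall : ∀ p ∈ args.zip ks, v p.1 = p.2
  · exact ⟨_, Finset.mem_union_right _ (Finset.mem_image_of_mem _ (hv.mem_tbl_of_zip hlen hall)),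
      rfl⟩
  · obtain ⟨p, hp, hne⟩ := not_forall₂.1 hall
    rcases (Finset.exists_mem_insert ..).1 (h p hp hΓ) with hp' | ⟨q, hq, hsat⟩
    · exact absurd hp' hne
    · exact ⟨q, Finset.mem_union_left _ hq, hsat⟩

theorem IsVal.sat_dualAx (hv : IsVal tbl v) {c : C} {args : List (Fm C)} {k : Fin n}
    {Λ : Finset (Fm C × Fin n)} (hΛ : Choice tbl c args k Λ) :
    Sat v ⟨{(Fm.app c args, k)}, Λ⟩ := by
  intro hant
  have hk : v (.app c args) = k := hant _ (Finset.mem_singleton_self _)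
  obtain ⟨p, hp, hpΛ⟩ := hΛ.1 _ (hk ▸ hv.zip_mem_theta c args)
  exact ⟨p, hpΛ, eq_of_mem_zip_map (List.mem_toFinset.1 hp)⟩

theorem IsVal.sat_anteRule (hv : IsVal tbl v) {Γ Δ : Finset (Fm C × Fin n)} {c : C}
    {args : List (Fm C)} {k : Fin n}
    (h : ∀ ks : List (Fin n), ks.length = args.length → k ∈ tbl c ks →
      Sat v ⟨Γ ∪ (args.zip ks).toFinset, Δ⟩) :
    Sat v ⟨insert (Fm.app c args, k) Γ, Δ⟩ := by
  intro hant
  obtain ⟨hk, hΓ⟩ := (Finset.forall_mem_insert ..).1 hant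
  refine h _ (List.length_map _) ((show v (.app c args) = k from hk) ▸ hv c args) fun p hp => ?_
  exact (Finset.mem_union.1 hp).elim (hΓ p) fun hp => eq_of_mem_zip_map (List.mem_toFinset.1 hp)

variable {R : Rules} {H : Set (Sequent C n)}

theorem Deriv.sound {S : Sequent C n} (h : Deriv R tbl H S) : Entails tbl H S := by
  induction h with
  | hyp hS => exact fun v _ hH => hH _ hS
  | ax ψ k => exact fun v _ _ hant => ⟨(ψ, k), by simp, hant _ (by simp)⟩
  | tableAx c args ks hlen =>
    exact fun v hv _ hant => ⟨_, Finset.mem_image_of_mem _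
      (hv.mem_tbl_of_zip hlen fun p hp => hant p (List.mem_toFinset.2 hp)), rfl⟩
  | lshift φ k _ ih =>
    exact fun v hv hH hant => exists_mem_union_image_compl fun hφ =>
      ih v hv hH ((Finset.forall_mem_insert ..).2 ⟨Finset.mem_singleton.1 hφ, hant⟩)
  | @rshift Γ Δ φ k' k'' hk _ ih =>
    intro v hv hH hant
    rcases (Finset.exists_mem_insert ..).1 (ih v hv hH fun q hq => hant q (by simp [hq])) with
      hφ | hΔ
    · exact absurd (hφ.symm.trans (hant (φ, k'') (Finset.mem_insert_self _ _))) hk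
    · exact hΔ
  | lweak φ k _ ih => exact fun v hv hH hant => ih v hv hH fun q hq => hant q (by simp [hq])
  | rweak φ k _ ih =>
    intro v hv hH hant
    obtain ⟨p, hp, hsat⟩ := ih v hv hH hant
    exact ⟨p, Finset.mem_insert_of_mem hp, hsat⟩
  | cut φ k _ _ _ ih₁ ih₂ =>
    intro v hv hH hant
    rcases (Finset.exists_mem_insert ..).1 (ih₁ v hv hH hant) with hφ | hΔ
    · exact ih₂ v hv hH ((Finset.forall_mem_insert ..).2 ⟨hφ, hant⟩)
    · exact hΔ
  | res φ _ hk _ _ ih₁ ih₂ =>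
    intro v hv hH hant
    rcases (Finset.exists_mem_insert ..).1 (ih₁ v hv hH hant) with hφ | ⟨p, hp, hsat⟩
    · rcases (Finset.exists_mem_insert ..).1 (ih₂ v hv hH hant) with hφ' | ⟨p, hp, hsat⟩
      · exact absurd (hφ.symm.trans hφ') hk
      · exact ⟨p, Finset.mem_union_right _ hp, hsat⟩
    · exact ⟨p, Finset.mem_union_left _ hp, hsat⟩
  | tableRuleS c args ks hlen _ _ ih =>
    exact fun v hv hH => hv.sat_tableRuleS hlen fun p hp => ih p hp v hv hH
  | dualAx c args k Λ _ hΛ => exact fun v hv _ => hv.sat_dualAx hΛ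
  | anteRule c args k _ _ ih =>
    exact fun v hv hH => hv.sat_anteRule fun ks hlen hk => ih ks hlen hk v hv hH
  | multiShift φ K _ _ _ ih =>
    exact fun v hv hH hant => exists_mem_union_image_compl fun hφ =>
      ih _ hφ v hv hH ((Finset.forall_mem_insert ..).2 ⟨rfl, hant⟩)

end Soundness

noncomputable def pick {C : Type} (Ω : Finset (Fm C × Fin n)) (ψ : Fm C) (s : Finset (Fin n))
    (hs : s.Nonempty) : Fin n :=
  if h : ∃ k ∈ s, (ψ, k) ∉ Ω then h.choose else hs.choose

theorem pick_mem {C : Type} (Ω : Finset (Fm C × Fin n)) (ψ : Fm C) {s : Finset (Fin n)}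
    (hs : s.Nonempty) : pick Ω ψ s hs ∈ s := by
  unfold pick
  split_ifs with h
  exacts [h.choose_spec.1, hs.choose_spec]

theorem pick_not_mem {C : Type} {Ω : Finset (Fm C × Fin n)} {ψ : Fm C} {s : Finset (Fin n)}
    (hs : s.Nonempty) (h : ∃ k ∈ s, (ψ, k) ∉ Ω) : (ψ, pick Ω ψ s hs) ∉ Ω := by
  rw [pick, dif_pos h]
  exact h.choose_spec.2

noncomputable def countermodel {C : Type} [NeZero n] {tbl : C → List (Fin n) → Finset (Fin n)}
    (htbl : ∀ c ks, (tbl c ks).Nonempty) (Ω : Finset (Fm C × Fin n)) : Fm C → Fin n :=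
  Fm.eval (fun m => pick Ω (.atom m) Finset.univ Finset.univ_nonempty)
    (fun c args ks => pick Ω (.app c args) (tbl c ks) (htbl c ks))

section Completeness

variable {R : Rules} {tbl : C → List (Fin n) → Finset (Fin n)} {H : Set (Sequent C n)}

theorem deriv_insert_of_maximal {U Ω : Finset (Fm C × Fin n)}
    (hΩ : Maximal (fun Ω => Ω ⊆ U ∧ ¬ Deriv R tbl H ⟨∅, Ω⟩) Ω) {x : Fm C × Fin n}
    (hxU : x ∈ U) (hxΩ : x ∉ Ω) : Deriv R tbl H ⟨∅, insert x Ω⟩ := by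
  by_contra hx
  exact hxΩ (hΩ.2 ⟨Finset.insert_subset hxU hΩ.1.1, hx⟩ (Finset.subset_insert _ _)
    (Finset.mem_insert_self _ _))

theorem countermodel_not_mem [NeZero n] (htbl : ∀ c ks, (tbl c ks).Nonempty)
    (hR : R.tableRuleS = true) {F : Finset (Fm C)}
    (hF : ∀ {c args}, Fm.app c args ∈ F → ∀ a ∈ args, a ∈ F) {Ω : Finset (Fm C × Fin n)}
    (hΩ : Maximal (fun Ω => Ω ⊆ F ×ˢ Finset.univ ∧ ¬ Deriv R tbl H ⟨∅, Ω⟩) Ω) (ψ : Fm C) :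
    (ψ, countermodel htbl Ω ψ) ∉ Ω := by
  induction ψ with
  | atom m =>
    rw [countermodel, Fm.eval]
    refine pick_not_mem _ (by_contra fun hrow => hΩ.1.2 ((Deriv.row (.atom m)).weaken_suc_s11 ?_))
    simpa [Finset.image_subset_iff] using hrow
  | app c args ih =>
    rw [countermodel, Fm.eval]
    refine pick_not_mem _ (by_contra fun hrow => hΩ.1.2 ?_)
    push Not at hrow
    have happ : Fm.app c args ∈ F :=
      (Finset.mem_product.1 (hΩ.1.1 (hrow _ (htbl c _).choose_spec))).1
    exact Deriv.of_table_subset hR (countermodel htbl Ω) (fun a ha => deriv_insert_of_maximal hΩ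
      (Finset.mem_product.2 ⟨hF happ a ha, Finset.mem_univ _⟩) (ih a ha)) hrow

theorem deriv_of_entails_of_ant_eq_empty [NeZero n] (htbl : ∀ c ks, (tbl c ks).Nonempty)
    (hR : R.tableRuleS = true) {Δ : Finset (Fm C × Fin n)} (h : Entails tbl ∅ ⟨∅, Δ⟩) :
    Deriv R tbl H ⟨∅, Δ⟩ := by
  by_contra hΔ
  set F : Finset (Fm C) := Δ.biUnion fun p => p.1.subformulas.toFinset
  have hΔF : Δ ⊆ F ×ˢ Finset.univ := fun p hp => Finset.mem_product.2
    ⟨Finset.mem_biUnion.2 ⟨p, hp, List.mem_toFinset.2 p.1.mem_subformulas_self⟩, Finset.mem_univ _⟩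
  have hF : ∀ {c args}, Fm.app c args ∈ F → ∀ a ∈ args, a ∈ F := fun happ a ha => by
    obtain ⟨p, hp, hsub⟩ := Finset.mem_biUnion.1 happ
    exact Finset.mem_biUnion.2 ⟨p, hp, List.mem_toFinset.2
      (Fm.mem_subformulas_of_app_mem ha _ (List.mem_toFinset.1 hsub))⟩
  have hfin : {Ω | Ω ⊆ F ×ˢ Finset.univ ∧ ¬ Deriv R tbl H ⟨∅, Ω⟩}.Finite :=
    (F ×ˢ Finset.univ).powerset.finite_toSet.subset fun Ω hΩ => Finset.mem_powerset.2 hΩ.1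
  obtain ⟨Ω, hΔΩ, hΩ⟩ := hfin.exists_le_maximal ⟨hΔF, hΔ⟩
  obtain ⟨p, hp, hvp⟩ := h (countermodel htbl Ω)
    (isVal_eval _ fun c _ ks => pick_mem Ω _ (htbl c ks)) (by simp) (by simp)
  exact countermodel_not_mem htbl hR hF hΩ p.1 (hvp ▸ hΔΩ hp)

theorem sat_lshiftImage {v : Fm C → Fin n} {Γ Δ : Finset (Fm C × Fin n)} (h : Sat v ⟨Γ, Δ⟩) :
    Sat v ⟨∅, Δ ∪ lshiftImage Γ⟩ := by
  intro _
  by_cases hΓ : ∀ p ∈ Γ, v p.1 = p.2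
  · obtain ⟨p, hp, hsat⟩ := h hΓ
    exact ⟨p, Finset.mem_union_left _ hp, hsat⟩
  · obtain ⟨p, hp, hne⟩ := not_forall₂.1 hΓ
    exact ⟨(p.1, v p.1), Finset.mem_union_right _
      (Finset.mem_biUnion.2 ⟨p, hp, Finset.mem_image.2 ⟨v p.1, by simpa using hne, rfl⟩⟩), rfl⟩

theorem deriv_of_entails [NeZero n] (htbl : ∀ c ks, (tbl c ks).Nonempty)
    (hR : R.tableRuleS = true) {S : Sequent C n} (h : Entails tbl ∅ S) : Deriv R tbl H S := by
  have h' : Entails tbl ∅ ⟨∅, S.suc ∪ lshiftImage S.ant⟩ := fun v hv hH =>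
    sat_lshiftImage (h v hv hH)
  simpa using (deriv_of_entails_of_ant_eq_empty htbl hR h').of_lshiftImage

end Completeness

/-- cut/resolution elimination for NMVL_R. -/
theorem stmt11 (hn : 2 ≤ n) (tbl : C → List (Fin n) → Finset (Fin n))
    (htbl : ∀ c ks, (tbl c ks).Nonempty) (S : Sequent C n)
    (hder : Deriv NMVL_R tbl ∅ S) : Deriv NMVL_R_cf tbl ∅ S :=
  have : NeZero n := ⟨by omega⟩
  deriv_of_entails htbl rfl hder.sound
end
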